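/- Every simple graph satisfying property P contains no induced subgraph isomorphic to an odd cycle of length greater than 3. -/

import Mathlib

/-!
Property P forbids an induced path `a – b – c – d`: applied to the disjoint edges `cd` and `ba`,
joined by the edge `bc`, it forces one of the chords `ac`, `ad`. A cycle of length at least 5
contains such an induced path on four consecutive vertices, and an odd length greater than 3 is
at least 5.
-/

/-- Property `P` of the paper: for any two disjoint edges `(v1,w1)` and
`(v2,w2)` of `G`, if `(v2,v1)` is an edge then `(w2,v1)` or `(w2,w1)` is an
edge of `G`. -/
def SimpleGraph.PropertyP {V : Type*} (G : SimpleGraph V) : Prop :=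
  ∀ ⦃v1 w1 v2 w2 : V⦄, G.Adj v1 w1 → G.Adj v2 w2 →
    v1 ≠ v2 → v1 ≠ w2 → w1 ≠ v2 → w1 ≠ w2 →
    G.Adj v2 v1 → (G.Adj w2 v1 ∨ G.Adj w2 w1)

theorem Fin.val_sub_eq_one_iff {n : ℕ} {a b : Fin n} (hb : b.val + 1 < n) :
    (a - b).val = 1 ↔ a.val = b.val + 1 := by
  rcases le_or_gt b a with hba | hab
  · rw [Fin.sub_val_of_le hba]
    omega
  · rw [Fin.coe_sub_iff_lt.mpr hab]
    omega

namespace SimpleGraph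

theorem PropertyP.isEmpty_pathGraph_four_embedding {V : Type*} {G : SimpleGraph V}
    (hP : G.PropertyP) : IsEmpty (pathGraph 4 ↪g G) := by
  refine ⟨fun f => ?_⟩
  have adj : ∀ i j : Fin 4, i.val + 1 = j.val → G.Adj (f i) (f j) := fun i j h =>
    f.map_adj_iff.mpr (pathGraph_adj.mpr (Or.inl h))
  have ne : ∀ i j : Fin 4, i ≠ j → f i ≠ f j := fun i j h => f.injective.ne h
  have chord := hP (adj 2 3 rfl) (adj 0 1 rfl).symm (ne 2 1 (by decide)) (ne 2 0 (by decide))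
    (ne 3 1 (by decide)) (ne 3 0 (by decide)) (adj 1 2 rfl)
  rcases chord with h | h <;> exact absurd (pathGraph_adj.mp (f.map_adj_iff.mp h)) (by decide)

def pathGraphEmbeddingCycleGraph {k n : ℕ} (h : k < n) : pathGraph k ↪g cycleGraph n where
  toEmbedding := Fin.castLEEmb h.le
  map_rel_iff' {u v} := by
    have hu : (Fin.castLEEmb h.le u).val + 1 < n := Nat.lt_of_le_of_lt u.isLt h
    have hv : (Fin.castLEEmb h.le v).val + 1 < n := Nat.lt_of_le_of_lt v.isLt h
    rw [cycleGraph_adj', Fin.val_sub_eq_one_iff hv, Fin.val_sub_eq_one_iff hu, pathGraph_adj]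
    simp only [Fin.castLEEmb_apply, Fin.val_castLE]
    omega

end SimpleGraph

theorem no_induced_long_odd_cycle_of_propertyP {V : Type*} (G : SimpleGraph V)
    (hP : G.PropertyP) (n : ℕ) (hn : 3 < n) (hodd : Odd n) :
    IsEmpty (SimpleGraph.cycleGraph n ↪g G) := by
  have h4n : 4 < n := by
    obtain ⟨k, rfl⟩ := hodd
    omega
  exact ⟨fun f => hP.isEmpty_pathGraph_four_embedding.false
    (f.comp (SimpleGraph.pathGraphEmbeddingCycleGraph h4n))⟩
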